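/- arXiv:1506.00419 — 3 statements merged into one kernel-verified Lean document; each statement's English description precedes it below -/
import Mathlib

section
/- Let I be a nonzero ideal of O_K. For every nonzero α ∈ I, the Euclidean length of τ(α) satisfies ‖τ(α)‖ ≥ √m·|N_{K/ℚ}(α)|^{1/m} ≥ √m·N(I)^{1/m}. In particular, the minimum Euclidean distance of the lattice L_I = τ(I) satisfies d_E(L_I) ≥ √m·N(I)^{1/m}. -/
open scoped BigOperators
open MeasureTheory

noncomputable section

/-- The index set for `ℝ^{s+2t}`: `s` real coordinates and `t` pairs of coordinates. -/
abbrev PackIdx (s t : ℕ) := Fin s ⊕ Fin t × Fin 2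

/-- The canonical embedding `τ : K → ℝ^{s+2t}`,
`τ(α) = (ρ₁(α),…,ρ_s(α), √2·Re σ₁(α), √2·Im σ₁(α), …, √2·Re σ_t(α), √2·Im σ_t(α))`. -/
def tauEmb {K : Type*} [Field K] {s t : ℕ}
    (ρ : Fin s → (K →+* ℝ)) (σ : Fin t → (K →+* ℂ)) (α : K) :
    EuclideanSpace ℝ (PackIdx s t) :=
  (EuclideanSpace.equiv (PackIdx s t) ℝ).symm <|
    Sum.elim (fun i => ρ i α)
      (fun p => if p.2 = (0 : Fin 2) then Real.sqrt 2 * (σ p.1 α).re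
                else Real.sqrt 2 * (σ p.1 α).im)

/-- The system of `s + 2t` field embeddings `K → ℂ` determined by the data `ρ, σ`:
the real embeddings `ρᵢ` and the complex embeddings `σⱼ` together with their conjugates. -/
def embSystem {K : Type*} [Field K] {s t : ℕ}
    (ρ : Fin s → (K →+* ℝ)) (σ : Fin t → (K →+* ℂ)) : PackIdx s t → (K →+* ℂ) :=
  Sum.elim (fun i => Complex.ofRealHom.comp (ρ i))
    (fun p => if p.2 = (0 : Fin 2) then σ p.1 else (starRingEnd ℂ).comp (σ p.1))

/-- `ρ, σ` list exactly the real embeddings and the pairs of complex-conjugate embeddings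
of `K`, without repetition: the associated system of `s+2t` embeddings `K → ℂ` is a
bijective enumeration of all field embeddings `K → ℂ`. -/
def IsEmbSystem {K : Type*} [Field K] {s t : ℕ}
    (ρ : Fin s → (K →+* ℝ)) (σ : Fin t → (K →+* ℂ)) : Prop :=
  Function.Bijective (embSystem ρ σ)

/-- The minimum (infimal) Euclidean distance between two distinct points of `P`. -/
def minDist {E : Type*} [MetricSpace E] (P : Set E) : ℝ :=
  sInf {d : ℝ | ∃ x ∈ P, ∃ y ∈ P, x ≠ y ∧ dist x y = d}

/-- The volume `V_N` of the unit ball in `ℝ^N` (with index set `ι`, `N = |ι|`). -/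
def unitBallVol (ι : Type*) [Fintype ι] : ℝ :=
  (volume (Metric.ball (0 : EuclideanSpace ℝ ι) 1)).toReal

/-- The packing density
`Δ(P) = limsup_{R→∞} |P ∩ B(R)| · r^N · V_N / vol(B(R+r))`, where `r = d_E(P)/2`. -/
def packDensity {ι : Type*} [Fintype ι] (P : Set (EuclideanSpace ℝ ι)) : ℝ :=
  Filter.limsup (fun R : ℝ =>
    (Nat.card (P ∩ Metric.closedBall 0 R : Set (EuclideanSpace ℝ ι)) : ℝ) *
      (minDist P / 2) ^ (Fintype.card ι) * unitBallVol ι /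
      (volume (Metric.closedBall (0 : EuclideanSpace ℝ ι) (R + minDist P / 2))).toReal)
    Filter.atTop

/-- `L_I = τ(I)`, the image in `ℝ^{s+2t}` of an ideal `I` of the ring of integers under the
canonical embedding. -/
def idealImage {K : Type*} [Field K] [NumberField K] {s t : ℕ}
    (ρ : Fin s → (K →+* ℝ)) (σ : Fin t → (K →+* ℂ))
    (I : Ideal (NumberField.RingOfIntegers K)) : Set (EuclideanSpace ℝ (PackIdx s t)) :=
  (fun a : NumberField.RingOfIntegers K =>
    tauEmb ρ σ (algebraMap (NumberField.RingOfIntegers K) K a)) '' (I : Set _)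

/-- The coordinatewise extension `τ : K^n → ℝ^{mn}`. -/
def tauEmbN {K : Type*} [Field K] {s t : ℕ} {n : ℕ}
    (ρ : Fin s → (K →+* ℝ)) (σ : Fin t → (K →+* ℂ)) (c : Fin n → K) :
    EuclideanSpace ℝ (Fin n × PackIdx s t) :=
  (EuclideanSpace.equiv (Fin n × PackIdx s t) ℝ).symm fun p => tauEmb ρ σ (c p.1) p.2

/-- The Cartesian product `L^n ⊆ ℝ^{mn}` of `n` copies of `L ⊆ ℝ^m`. -/
def prodSet {ι : Type*} (n : ℕ) (L : Set (EuclideanSpace ℝ ι)) :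
    Set (EuclideanSpace ℝ (Fin n × ι)) :=
  {x | ∀ j : Fin n,
    ((EuclideanSpace.equiv ι ℝ).symm fun i => (EuclideanSpace.equiv (Fin n × ι) ℝ) x (j, i)) ∈ L}

/-- `S` is a valid alphabet set at level `i`: a set of `q` elements of `p^i` containing `0`
whose residues modulo `p^{i+1}` represent the `q` distinct elements of `p^i/p^{i+1}`. -/
def IsRepSet {K : Type*} [Field K] [NumberField K]
    (p : Ideal (NumberField.RingOfIntegers K)) (i q : ℕ)
    (S : Set (NumberField.RingOfIntegers K)) : Prop :=
  S ⊆ (p ^ i : Ideal (NumberField.RingOfIntegers K)) ∧ (0 : NumberField.RingOfIntegers K) ∈ S ∧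
    Nat.card S = q ∧
    (∀ x ∈ S, ∀ y ∈ S, x ≠ y → x - y ∉ (p ^ (i + 1) : Ideal (NumberField.RingOfIntegers K))) ∧
    (∀ z ∈ (p ^ i : Ideal (NumberField.RingOfIntegers K)), ∃ a ∈ S,
      z - a ∈ (p ^ (i + 1) : Ideal (NumberField.RingOfIntegers K)))

/-- Hamming distance between two words. -/
def hDist {n : ℕ} {A : Type*} (u v : Fin n → A) : ℕ := Nat.card {j : Fin n // u j ≠ v j}

/-- The minimum Hamming distance of a code `C`. -/
def codeMinDist {n : ℕ} {A : Type*} (C : Set (Fin n → A)) : ℕ :=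
  sInf {d : ℕ | ∃ u ∈ C, ∃ v ∈ C, u ≠ v ∧ hDist u v = d}

/-- `C` is an `(n, M, d)`-code over the alphabet set `S`. -/
def IsCode {A : Type*} {n : ℕ} (S : Set A) (M d : ℕ) (C : Set (Fin n → A)) : Prop :=
  (∀ c ∈ C, ∀ j, c j ∈ S) ∧ Nat.card C = M ∧ codeMinDist C = d

/-- The translate `τ(c) + P` of `P` by the embedded codeword `c`. -/
def wordTranslate {K : Type*} [Field K] [NumberField K] {s t n : ℕ}
    (ρ : Fin s → (K →+* ℝ)) (σ : Fin t → (K →+* ℂ))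
    (c : Fin n → NumberField.RingOfIntegers K)
    (P : Set (EuclideanSpace ℝ (Fin n × PackIdx s t))) :
    Set (EuclideanSpace ℝ (Fin n × PackIdx s t)) :=
  {z | ∃ x ∈ P, z = tauEmbN ρ σ (fun j => algebraMap (NumberField.RingOfIntegers K) K (c j)) + x}

/-- The concatenation `τ(C) + P = { τ(c) + p : c ∈ C, p ∈ P }`. -/
def codeTranslate {K : Type*} [Field K] [NumberField K] {s t n : ℕ}
    (ρ : Fin s → (K →+* ℝ)) (σ : Fin t → (K →+* ℂ))
    (C : Set (Fin n → NumberField.RingOfIntegers K))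
    (P : Set (EuclideanSpace ℝ (Fin n × PackIdx s t))) :
    Set (EuclideanSpace ℝ (Fin n × PackIdx s t)) :=
  {z | ∃ c ∈ C, ∃ x ∈ P,
    z = tauEmbN ρ σ (fun j => algebraMap (NumberField.RingOfIntegers K) K (c j)) + x}

/-- The concatenation `τ(𝒞) + P = { Σ_{i<ℓ} τ(cᵢ) + p : cᵢ ∈ Cᵢ, p ∈ P }` of a family of codes. -/
def famTranslate {K : Type*} [Field K] [NumberField K] {s t n ℓ : ℕ}
    (ρ : Fin s → (K →+* ℝ)) (σ : Fin t → (K →+* ℂ))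
    (C : Fin ℓ → Set (Fin n → NumberField.RingOfIntegers K))
    (P : Set (EuclideanSpace ℝ (Fin n × PackIdx s t))) :
    Set (EuclideanSpace ℝ (Fin n × PackIdx s t)) :=
  {z | ∃ c : Fin ℓ → (Fin n → NumberField.RingOfIntegers K), (∀ i, c i ∈ C i) ∧ ∃ x ∈ P,
    z = (∑ i : Fin ℓ,
      tauEmbN ρ σ (fun j => algebraMap (NumberField.RingOfIntegers K) K (c i j))) + x}


/-! `‖τ(α)‖²` is the sum of `|φ(α)|²` over the `m` embeddings `φ : K → ℂ` (a complex pair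
contributes `2 Re² + 2 Im² = |σ|² + |σ̄|²`), so AM–GM bounds it below by
`m · (∏ |φ(α)|²)^{1/m} = m · |N(α)|^{2/m}`; and `N(I) ∣ N(α)` for `α ∈ I`. As `τ` is additive, a
distance between points of `L_I` is the norm of `τ(a - b)` with `a - b ∈ I` nonzero. -/

open NumberField

theorem Real.card_mul_prod_rpow_le_sum {ι : Type*} [Fintype ι] (f : ι → ℝ)
    (hf : ∀ i, 0 ≤ f i) :
    Fintype.card ι * (∏ i, f i) ^ ((1 : ℝ) / Fintype.card ι) ≤ ∑ i, f i := by
  rcases isEmpty_or_nonempty ι with hι | hι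
  · simp
  have hcard : (0 : ℝ) < Fintype.card ι := by exact_mod_cast Fintype.card_pos
  have amgm := Real.geom_mean_le_arith_mean Finset.univ (fun _ => (1 : ℝ)) f
    (fun _ _ => zero_le_one) (by simpa using hcard) (fun i _ => hf i)
  simp only [Real.rpow_one, Finset.sum_const, Finset.card_univ, nsmul_eq_mul, mul_one,
    one_mul] at amgm
  rw [one_div, ← le_div_iff₀' hcard]
  exact amgm

theorem Ideal.absNorm_le_abs_norm_of_mem {K : Type*} [Field K] [NumberField K] {I : Ideal (𝓞 K)}
    {α : 𝓞 K} (hα : α ∈ I) (h0 : α ≠ 0) :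
    (Ideal.absNorm I : ℝ) ≤ |(Algebra.norm ℚ (α : K) : ℝ)| := by
  have hle : (Ideal.absNorm I : ℤ) ≤ |Algebra.norm ℤ α| :=
    Int.le_of_dvd (abs_pos.mpr (Algebra.norm_ne_zero_iff.mpr h0))
      ((dvd_abs _ _).mpr (Ideal.absNorm_dvd_norm_of_mem hα))
  rw [← Algebra.coe_norm_int]
  exact_mod_cast hle

theorem NumberField.abs_norm_eq_prod_norm_embeddings {K : Type*} [Field K] [NumberField K]
    (x : K) : |(Algebra.norm ℚ x : ℝ)| = ∏ φ : K →+* ℂ, ‖φ x‖ := by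
  have hnorm : ‖algebraMap ℚ ℂ (Algebra.norm ℚ x)‖ = ∏ φ : K →+* ℂ, ‖φ x‖ := by
    rw [Algebra.norm_eq_prod_embeddings, norm_prod]
    exact (Fintype.prod_equiv (RingHom.equivRatAlgHom K ℂ) _ _ fun φ => rfl).symm
  rw [← hnorm, eq_ratCast, Complex.norm_ratCast]

theorem le_minDist {E : Type*} [MetricSpace E] {P : Set E} {B : ℝ}
    (hP : ∃ x ∈ P, ∃ y ∈ P, x ≠ y) (h : ∀ x ∈ P, ∀ y ∈ P, x ≠ y → B ≤ dist x y) :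
    B ≤ minDist P := by
  obtain ⟨x, hx, y, hy, hxy⟩ := hP
  refine le_csInf ⟨_, x, hx, y, hy, hxy, rfl⟩ ?_
  rintro _ ⟨x, hx, y, hy, hxy, rfl⟩
  exact h x hx y hy hxy

section CanonicalEmbedding

variable {K : Type*} [Field K] {s t : ℕ} (ρ : Fin s → (K →+* ℝ)) (σ : Fin t → (K →+* ℂ))

theorem tauEmb_sub (x y : K) : tauEmb ρ σ (x - y) = tauEmb ρ σ x - tauEmb ρ σ y := by
  ext (i | ⟨j, k⟩)
  · simp [tauEmb]
  · by_cases hk : k = 0 <;> simp [tauEmb, hk, mul_sub]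

theorem tauEmb_zero : tauEmb ρ σ 0 = 0 := by
  simpa using tauEmb_sub ρ σ 0 0

theorem norm_tauEmb_sq (α : K) :
    ‖tauEmb ρ σ α‖ ^ 2 = ∑ i : PackIdx s t, ‖embSystem ρ σ i α‖ ^ 2 := by
  rw [EuclideanSpace.norm_sq_eq, Fintype.sum_sum_type, Fintype.sum_sum_type,
    Fintype.sum_prod_type, Fintype.sum_prod_type]
  congr 1
  · simp [tauEmb, embSystem]
  · refine Finset.sum_congr rfl fun j _ => ?_
    simp [tauEmb, embSystem, Fin.sum_univ_two, mul_pow, Complex.sq_norm, Complex.normSq_apply]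
    ring

variable [NumberField K] {ρ σ}

theorem card_packIdx_eq_finrank (hemb : IsEmbSystem ρ σ) :
    Fintype.card (PackIdx s t) = Module.finrank ℚ K := by
  rw [Fintype.card_of_bijective hemb, NumberField.Embeddings.card K ℂ]

theorem abs_norm_eq_prod_norm_embSystem (hemb : IsEmbSystem ρ σ) (α : K) :
    |(Algebra.norm ℚ α : ℝ)| = ∏ i : PackIdx s t, ‖embSystem ρ σ i α‖ := by
  rw [NumberField.abs_norm_eq_prod_norm_embeddings]
  exact (Fintype.prod_bijective _ hemb _ _ fun _ => rfl).symm

theorem sqrt_card_mul_abs_norm_rpow_le_norm_tauEmb (hemb : IsEmbSystem ρ σ) (α : K) :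
    √(Fintype.card (PackIdx s t) : ℝ) *
      |(Algebra.norm ℚ α : ℝ)| ^ ((1 : ℝ) / Fintype.card (PackIdx s t)) ≤ ‖tauEmb ρ σ α‖ := by
  set m := Fintype.card (PackIdx s t)
  have amgm := Real.card_mul_prod_rpow_le_sum (fun i => ‖embSystem ρ σ i α‖ ^ 2)
    fun _ => sq_nonneg _
  rw [Finset.prod_pow, ← abs_norm_eq_prod_norm_embSystem hemb, ← norm_tauEmb_sq,
    ← Real.rpow_pow_comm (abs_nonneg _)] at amgm
  refine le_of_pow_le_pow_left₀ two_ne_zero (norm_nonneg _) ?_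
  rwa [mul_pow, Real.sq_sqrt m.cast_nonneg]

end CanonicalEmbedding

theorem le_minDist_idealImage {K : Type*} [Field K] [NumberField K] {s t : ℕ}
    (ρ : Fin s → (K →+* ℝ)) (σ : Fin t → (K →+* ℂ)) {I : Ideal (𝓞 K)} (hI : I ≠ ⊥) {B : ℝ}
    (hB : 0 < B) (hle : ∀ α ∈ I, α ≠ 0 → B ≤ ‖tauEmb ρ σ (α : K)‖) :
    B ≤ minDist (idealImage ρ σ I) := by
  have dist_eq (a b : 𝓞 K) : dist (tauEmb ρ σ (a : K)) (tauEmb ρ σ (b : K)) =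
      ‖tauEmb ρ σ ((a - b : 𝓞 K) : K)‖ := by
    rw [dist_eq_norm, ← tauEmb_sub, ← map_sub]
  obtain ⟨α, hαI, hα0⟩ := Submodule.exists_mem_ne_zero_of_ne_bot hI
  refine le_minDist ⟨_, ⟨α, hαI, rfl⟩, 0, ⟨0, I.zero_mem, ?_⟩, ?_⟩ ?_
  · simpa using tauEmb_zero ρ σ
  · exact norm_pos_iff.mp (hB.trans_le (hle α hαI hα0))
  rintro _ ⟨a, ha, rfl⟩ _ ⟨b, hb, rfl⟩ hab
  rw [dist_eq]
  exact hle _ (I.sub_mem ha hb) (sub_ne_zero.mpr fun h => hab (h ▸ rfl))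

/-- For every nonzero `α` in a nonzero ideal `I` of `O_K`,
`‖τ(α)‖ ≥ √m·|N_{K/ℚ}(α)|^{1/m} ≥ √m·N(I)^{1/m}`; in particular
`d_E(L_I) ≥ √m·N(I)^{1/m}`. -/
theorem statement1 {K : Type*} [Field K] [NumberField K] {s t m : ℕ}
    (ρ : Fin s → (K →+* ℝ)) (σ : Fin t → (K →+* ℂ)) (hemb : IsEmbSystem ρ σ)
    (hm : m = s + 2 * t)
    (I : Ideal (NumberField.RingOfIntegers K)) (hI : I ≠ ⊥) :
    (∀ α : NumberField.RingOfIntegers K, α ∈ I → α ≠ 0 →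
      Real.sqrt (m : ℝ) * (Ideal.absNorm I : ℝ) ^ ((1 : ℝ) / m) ≤
        Real.sqrt (m : ℝ) *
          |(Algebra.norm ℚ (algebraMap (NumberField.RingOfIntegers K) K α) : ℝ)| ^ ((1 : ℝ) / m) ∧
      Real.sqrt (m : ℝ) *
          |(Algebra.norm ℚ (algebraMap (NumberField.RingOfIntegers K) K α) : ℝ)| ^ ((1 : ℝ) / m) ≤
        ‖tauEmb ρ σ (algebraMap (NumberField.RingOfIntegers K) K α)‖) ∧
    Real.sqrt (m : ℝ) * (Ideal.absNorm I : ℝ) ^ ((1 : ℝ) / m) ≤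
      minDist (idealImage ρ σ I) := by
  have hcard : Fintype.card (PackIdx s t) = m := by
    simp only [hm, Fintype.card_sum, Fintype.card_prod, Fintype.card_fin]
    ring
  have hm0 : 0 < m := hcard ▸ card_packIdx_eq_finrank hemb ▸ Module.finrank_pos
  have hbound (α : 𝓞 K) (hα : α ∈ I) (h0 : α ≠ 0) :
      √(m : ℝ) * (Ideal.absNorm I : ℝ) ^ ((1 : ℝ) / m) ≤
          √(m : ℝ) * |(Algebra.norm ℚ (α : K) : ℝ)| ^ ((1 : ℝ) / m) ∧
        √(m : ℝ) * |(Algebra.norm ℚ (α : K) : ℝ)| ^ ((1 : ℝ) / m) ≤ ‖tauEmb ρ σ (α : K)‖ :=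
    ⟨by gcongr; exact Ideal.absNorm_le_abs_norm_of_mem hα h0,
      hcard ▸ sqrt_card_mul_abs_norm_rpow_le_norm_tauEmb hemb _⟩
  have hNI : 0 < (Ideal.absNorm I : ℝ) := by
    exact_mod_cast Nat.pos_of_ne_zero (mt Ideal.absNorm_eq_zero_iff.mp hI)
  exact ⟨hbound, le_minDist_idealImage ρ σ hI (by positivity) fun α hα h0 =>
    (hbound α hα h0).1.trans (hbound α hα h0).2⟩

end
end

section
/- Let p be a nonzero prime ideal of O_K, let i₀ ≥ 1, let P ⊆ L_{i₀}^n, and let C be a q-ary code of length n over the alphabet set S_{i₀-1} containing the zero codeword. If P is a lattice (a discrete additive subgroup of ℝ^{mn}) and C satisfies the property that for any codewords u, v ∈ C there exist a codeword w ∈ C and a point p ∈ P with τ(u) + τ(v) = τ(w) + p, then τ(C) + P is also a lattice in ℝ^{mn}. -/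
open scoped BigOperators
open MeasureTheory

noncomputable section

/-!
Passing to the quotient `ℝ^{mn} ⧸ P`, the set `τ(C) + P` is the preimage of the image `T` of
`τ(C)`. The closure hypothesis makes `T` an additive submonoid of a group, finite since `C ⊆ Sⁿ`
with `|S| = q`, hence a subgroup (every element has finite order, so its negative is one of its
multiples). Its preimage `τ(C) + P` is therefore a subgroup, and it is discrete as a finite union
of translates of the closed discrete subgroup `P`.
-/

open Pointwise

theorem AddSubmonoid.neg_mem_of_finite {G : Type*} [AddGroup G] (M : AddSubmonoid G)
    (hM : (M : Set G).Finite) {a : G} (ha : a ∈ M) : -a ∈ M := by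
  have hfin : IsOfFinAddOrder a :=
    finite_multiples.mp (hM.subset (AddSubmonoid.multiples_le.mpr ha))
  have hneg : -a ∈ AddSubmonoid.multiples a :=
    hfin.mem_multiples_iff_mem_zmultiples.mpr (neg_mem (AddSubgroup.mem_zmultiples a))
  exact AddSubmonoid.multiples_le.mpr ha hneg

theorem AddSubgroup.exists_coe_eq_of_finite {G : Type*} [AddGroup G] {T : Set G}
    (hT : T.Finite) (h0 : 0 ∈ T) (hadd : ∀ a ∈ T, ∀ b ∈ T, a + b ∈ T) :
    ∃ H : AddSubgroup G, (H : Set G) = T :=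
  let M : AddSubmonoid G := ⟨⟨T, fun ha hb => hadd _ ha _ hb⟩, h0⟩
  ⟨{ M with neg_mem' := M.neg_mem_of_finite hT }, rfl⟩

theorem AddSubgroup.isDiscrete_add_of_finite {G : Type*} [TopologicalSpace G] [AddGroup G]
    [IsTopologicalAddGroup G] [T2Space G] (Λ : AddSubgroup G) [DiscreteTopology Λ] {A : Set G}
    (hA : A.Finite) : IsDiscrete (A + (Λ : Set G)) := by
  rw [← Set.iUnion_add_left_image]
  refine .biUnion hA (fun a _ => ?_) fun a _ =>
    (Homeomorph.addLeft a).isClosedMap _ Λ.isClosed_of_discrete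
  exact (isDiscrete_iff_discreteTopology.mpr ‹_›).image (Homeomorph.addLeft a).isInducing

theorem AddSubgroup.exists_discrete_coe_eq_add {G : Type*} [TopologicalSpace G] [AddCommGroup G]
    [IsTopologicalAddGroup G] [T2Space G] (Λ : AddSubgroup G) [DiscreteTopology Λ] {A : Set G}
    (hA : A.Finite) (h0 : 0 ∈ A) (hadd : ∀ a ∈ A, ∀ b ∈ A, ∃ c ∈ A, ∃ x ∈ Λ, a + b = c + x) :
    ∃ Λ' : AddSubgroup G, (Λ' : Set G) = A + Λ ∧ DiscreteTopology Λ' := by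
  obtain ⟨H, hH⟩ : ∃ H : AddSubgroup (G ⧸ Λ), (H : Set (G ⧸ Λ)) = (↑) '' A := by
    refine exists_coe_eq_of_finite (hA.image _) ⟨0, h0, rfl⟩ ?_
    rintro - ⟨a, ha, rfl⟩ - ⟨b, hb, rfl⟩
    obtain ⟨c, hc, x, hx, habc⟩ := hadd a ha b hb
    refine ⟨c, hc, ?_⟩
    rw [← QuotientAddGroup.mk_add, habc, QuotientAddGroup.mk_add,
      (QuotientAddGroup.eq_zero_iff x).mpr hx, add_zero]
  have hcoe : (H.comap (QuotientAddGroup.mk' Λ) : Set G) = A + Λ := by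
    rw [AddSubgroup.coe_comap, hH, QuotientAddGroup.coe_mk',
      QuotientAddGroup.preimage_image_mk_eq_add]
  refine ⟨H.comap (QuotientAddGroup.mk' Λ), hcoe, ?_⟩
  have hdisc : IsDiscrete (A + (Λ : Set G)) := Λ.isDiscrete_add_of_finite hA
  rw [← hcoe] at hdisc
  exact hdisc.to_subtype

theorem IsRepSet.finite {K : Type*} [Field K] [NumberField K]
    {p : Ideal (NumberField.RingOfIntegers K)} {i q : ℕ}
    {S : Set (NumberField.RingOfIntegers K)} (hS : IsRepSet p i q S) (hq : q ≠ 0) : S.Finite :=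
  Nat.finite_of_card_ne_zero (hS.2.2.1 ▸ hq)

theorem tauEmbN_zero {K : Type*} [Field K] {s t n : ℕ}
    (ρ : Fin s → (K →+* ℝ)) (σ : Fin t → (K →+* ℂ)) :
    tauEmbN ρ σ (fun _ : Fin n => (0 : K)) = 0 := by
  ext ⟨j, i | i⟩ <;> simp [tauEmbN, tauEmb]

theorem codeTranslate_eq_image_add {K : Type*} [Field K] [NumberField K] {s t n : ℕ}
    (ρ : Fin s → (K →+* ℝ)) (σ : Fin t → (K →+* ℂ))
    (C : Set (Fin n → NumberField.RingOfIntegers K))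
    (P : Set (EuclideanSpace ℝ (Fin n × PackIdx s t))) :
    codeTranslate ρ σ C P =
      (fun c => tauEmbN ρ σ (fun j => algebraMap (NumberField.RingOfIntegers K) K (c j))) '' C +
        P := by
  ext z
  simp [codeTranslate, Set.mem_add, eq_comm]

theorem statement8_general {K : Type*} [Field K] [NumberField K] {s t : ℕ}
    (ρ : Fin s → (K →+* ℝ)) (σ : Fin t → (K →+* ℂ))
    (p : Ideal (NumberField.RingOfIntegers K)) (hp0 : p ≠ ⊥)
    (q : ℕ) (hq : Ideal.absNorm p = q) (i0 : ℕ) {n : ℕ}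
    (P : Set (EuclideanSpace ℝ (Fin n × PackIdx s t)))
    (S : Set (NumberField.RingOfIntegers K)) (hS : IsRepSet p (i0 - 1) q S)
    (C : Set (Fin n → NumberField.RingOfIntegers K)) (hCS : ∀ c ∈ C, ∀ j, c j ∈ S)
    (h0C : (fun _ => (0 : NumberField.RingOfIntegers K)) ∈ C)
    (Λ : AddSubgroup (EuclideanSpace ℝ (Fin n × PackIdx s t)))
    (hΛ : (Λ : Set (EuclideanSpace ℝ (Fin n × PackIdx s t))) = P) (hΛd : DiscreteTopology Λ)
    (hclosed : ∀ u ∈ C, ∀ v ∈ C, ∃ w ∈ C, ∃ x ∈ P,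
      tauEmbN ρ σ (fun j => algebraMap (NumberField.RingOfIntegers K) K (u j)) +
        tauEmbN ρ σ (fun j => algebraMap (NumberField.RingOfIntegers K) K (v j)) =
      tauEmbN ρ σ (fun j => algebraMap (NumberField.RingOfIntegers K) K (w j)) + x) :
    ∃ Λ' : AddSubgroup (EuclideanSpace ℝ (Fin n × PackIdx s t)),
      (Λ' : Set (EuclideanSpace ℝ (Fin n × PackIdx s t))) = codeTranslate ρ σ C P ∧
      DiscreteTopology Λ' := by
  subst hΛ
  have hq0 : q ≠ 0 := hq ▸ mt Ideal.absNorm_eq_zero_iff.mp hp0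
  have hC : C.Finite :=
    (Set.Finite.pi fun _ => hS.finite hq0).subset fun c hc j _ => hCS c hc j
  set τ : (Fin n → NumberField.RingOfIntegers K) → EuclideanSpace ℝ (Fin n × PackIdx s t) :=
    fun c => tauEmbN ρ σ fun j => algebraMap (NumberField.RingOfIntegers K) K (c j)
  obtain ⟨Λ', hΛ', hdisc⟩ := Λ.exists_discrete_coe_eq_add (hC.image τ)
    ⟨_, h0C, by simpa [τ] using tauEmbN_zero ρ σ⟩ (by
    rintro - ⟨u, hu, rfl⟩ - ⟨v, hv, rfl⟩
    obtain ⟨w, hw, x, hx, hsum⟩ := hclosed u hu v hv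
    exact ⟨_, ⟨w, hw, rfl⟩, x, hx, hsum⟩)
  exact ⟨Λ', hΛ'.trans (codeTranslate_eq_image_add ρ σ C Λ).symm, hdisc⟩

/-- If `P` is a lattice (a discrete additive subgroup of `ℝ^{mn}`) and `C` is
closed under addition modulo `P` (for any `u, v ∈ C` there are `w ∈ C` and `p ∈ P` with
`τ(u) + τ(v) = τ(w) + p`), then `τ(C) + P` is also a lattice in `ℝ^{mn}`. -/
theorem statement8 {K : Type*} [Field K] [NumberField K] {s t m : ℕ}
    (ρ : Fin s → (K →+* ℝ)) (σ : Fin t → (K →+* ℂ)) (hemb : IsEmbSystem ρ σ)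
    (hm : m = s + 2 * t)
    (p : Ideal (NumberField.RingOfIntegers K)) (hp : p.IsPrime) (hp0 : p ≠ ⊥)
    (q : ℕ) (hq : Ideal.absNorm p = q) (i0 : ℕ) (hi0 : 1 ≤ i0) {n : ℕ}
    (P : Set (EuclideanSpace ℝ (Fin n × PackIdx s t)))
    (hP : P ⊆ prodSet n (idealImage ρ σ (p ^ i0)))
    (S : Set (NumberField.RingOfIntegers K)) (hS : IsRepSet p (i0 - 1) q S)
    (C : Set (Fin n → NumberField.RingOfIntegers K)) (hCS : ∀ c ∈ C, ∀ j, c j ∈ S)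
    (h0C : (fun _ => (0 : NumberField.RingOfIntegers K)) ∈ C)
    (Λ : AddSubgroup (EuclideanSpace ℝ (Fin n × PackIdx s t)))
    (hΛ : (Λ : Set (EuclideanSpace ℝ (Fin n × PackIdx s t))) = P) (hΛd : DiscreteTopology Λ)
    (hclosed : ∀ u ∈ C, ∀ v ∈ C, ∃ w ∈ C, ∃ x ∈ P,
      tauEmbN ρ σ (fun j => algebraMap (NumberField.RingOfIntegers K) K (u j)) +
        tauEmbN ρ σ (fun j => algebraMap (NumberField.RingOfIntegers K) K (v j)) =
      tauEmbN ρ σ (fun j => algebraMap (NumberField.RingOfIntegers K) K (w j)) + x) :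
    ∃ Λ' : AddSubgroup (EuclideanSpace ℝ (Fin n × PackIdx s t)),
      (Λ' : Set (EuclideanSpace ℝ (Fin n × PackIdx s t))) = codeTranslate ρ σ C P ∧
      DiscreteTopology Λ' :=
  statement8_general ρ σ p hp0 q hq i0 P S hS C hCS h0C Λ hΛ hΛd hclosed

end
end

section
/- For all sufficiently large positive integers N, the volume V_N of the unit ball in ℝ^N satisfies log₂ V_N = −(N/2)·log₂(N/(2πe)) − (1/2)·log₂(Nπ) − ε for some ε with 0 < ε < (log₂ e)/(6N). -/
open scoped BigOperators
open MeasureTheory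

noncomputable section

/-!
Let `μ(x) = log Γ(x + 1) - (x log x - x + ½ log (2πx))` be Binet's function
(`stirlingRemainder`). Since `V_N = π^{N/2} / Γ(N/2 + 1)`, the claim holds with
`ε = μ(N/2) / log 2`, and it remains to show `0 < μ(x) < 1 / (12x)` for `x > 0`.
The series `log (1 + 1/x) = 2 ∑ (2k+1)⁻¹ (2x+1)^{-(2k+1)}` gives
`0 < μ(x) - μ(x + 1) < 1/(12x) - 1/(12(x + 1))`, and `μ(x + n) → 0` as `n → ∞` by Stirling's
formula for `n!` together with Euler's limit formula `Γ(x + n + 1) ~ n^x n!`.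
-/

open Real Filter Topology Stirling
open scoped Nat

def stirlingRemainder (x : ℝ) : ℝ :=
  log (Gamma (x + 1)) - (x * log x - x + log (2 * π * x) / 2)

lemma stirlingRemainder_sub_add_one {x : ℝ} (hx : 0 < x) :
    stirlingRemainder x - stirlingRemainder (x + 1) = (x + 1 / 2) * log (1 + x⁻¹) - 1 := by
  have hx1 : 0 < x + 1 := by positivity
  have h : 1 + x⁻¹ = (x + 1) / x := by field
  rw [stirlingRemainder, stirlingRemainder, Gamma_add_one (s := x + 1) hx1.ne',
    log_mul hx1.ne' (Gamma_pos_of_pos hx1).ne', h, log_div hx1.ne' hx.ne',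
    log_mul (by positivity) hx.ne', log_mul (by positivity) hx1.ne']
  ring

lemma hasSum_mul_log_one_add_inv_sub_one {x : ℝ} (hx : 0 < x) :
    HasSum (fun k : ℕ => (1 : ℝ) / (2 * ↑(k + 1) + 1) * ((1 / (2 * x + 1)) ^ 2) ^ (k + 1))
      ((x + 1 / 2) * log (1 + x⁻¹) - 1) := by
  let f (k : ℕ) := (1 : ℝ) / (2 * k + 1) * ((1 / (2 * x + 1)) ^ 2) ^ k
  change HasSum (fun k => f (k + 1)) _
  rw [hasSum_nat_add_iff]
  convert! (hasSum_log_one_add_inv hx).mul_left (x + 1 / 2) using 1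
  · ext k
    dsimp only [f]
    rw [← pow_mul, pow_add]
    field
  · simp [f]

lemma stirlingRemainder_sub_add_one_pos {x : ℝ} (hx : 0 < x) :
    0 < stirlingRemainder x - stirlingRemainder (x + 1) := by
  rw [stirlingRemainder_sub_add_one hx]
  exact hasSum_lt (f := 0) (i := 0) (fun k => by positivity) (by positivity) hasSum_zero
    (hasSum_mul_log_one_add_inv_sub_one hx)

lemma stirlingRemainder_sub_add_one_lt {x : ℝ} (hx : 0 < x) :
    stirlingRemainder x - stirlingRemainder (x + 1) < 1 / (12 * x) - 1 / (12 * (x + 1)) := by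
  set r := (1 / (2 * x + 1)) ^ 2 with hr
  have hr0 : 0 < r := by positivity
  have hr1 : r < 1 := by
    rw [hr, div_pow, one_pow, div_lt_one (by positivity)]
    nlinarith
  have hgeo : HasSum (fun k : ℕ => r ^ (k + 1) / 3) (1 / (12 * x) - 1 / (12 * (x + 1))) := by
    convert! ((hasSum_geometric_of_lt_one hr0.le hr1).mul_right r).div_const 3 using 1
    have : 1 - r = 4 * x * (x + 1) / (2 * x + 1) ^ 2 := by rw [hr]; field
    rw [this, hr]
    field
  rw [stirlingRemainder_sub_add_one hx]
  refine hasSum_lt (i := 1) (fun k => ?_) ?_ (hasSum_mul_log_one_add_inv_sub_one hx) hgeo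
  · rw [div_mul_eq_mul_div, one_mul]
    refine div_le_div_of_nonneg_left (by positivity) (by norm_num) ?_
    push_cast
    linarith [k.cast_nonneg (α := ℝ)]
  · rw [← hr, show (2 * ((1 + 1 : ℕ) : ℝ) + 1) = 5 by norm_num]
    have := pow_pos hr0 2
    ring_nf
    linarith

lemma stirlingRemainder_natCast {n : ℕ} (hn : n ≠ 0) :
    stirlingRemainder n = log (stirlingSeq n) - log π / 2 := by
  have hn0 : (0 : ℝ) < n := by positivity
  rw [stirlingRemainder, Gamma_nat_eq_factorial, log_stirlingSeq_formula,
    log_div hn0.ne' (exp_ne_zero 1), log_exp, log_mul (by positivity) hn0.ne',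
    log_mul (by positivity) hn0.ne', log_mul two_ne_zero pi_ne_zero]
  ring

lemma tendsto_stirlingRemainder_natCast :
    Tendsto (fun n : ℕ => stirlingRemainder n) atTop (𝓝 0) := by
  have h := (((continuousAt_log (by positivity)).tendsto.comp
    tendsto_stirlingSeq_sqrt_pi).sub_const (log π / 2))
  rw [log_sqrt pi_pos.le, sub_self] at h
  exact h.congr' ((eventually_ne_atTop 0).mono fun n hn => (stirlingRemainder_natCast hn).symm)

lemma tendsto_log_Gamma_add_natCast_sub {x : ℝ} (hx : 0 < x) :
    Tendsto (fun n : ℕ => log (Gamma (x + n + 1)) - log (n ! : ℝ) - x * log n) atTop (𝓝 0) := by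
  have hfeq : ∀ {y : ℝ}, 0 < y → (log ∘ Gamma) (y + 1) = (log ∘ Gamma) y + log y := fun hy => by
    simp [Gamma_add_one hy.ne', log_mul hy.ne' (Gamma_pos_of_pos hy).ne', add_comm]
  have h := (BohrMollerup.tendsto_log_gamma hx).const_sub (log (Gamma x))
  rw [sub_self] at h
  refine h.congr fun n => ?_
  have hsum := BohrMollerup.f_add_nat_eq hfeq hx (n + 1)
  simp only [Function.comp_apply, Nat.cast_add_one, ← add_assoc] at hsum
  rw [BohrMollerup.logGammaSeq, hsum]
  ring

lemma tendsto_stirlingRemainder_add_natCast {x : ℝ} (hx : 0 < x) :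
    Tendsto (fun n : ℕ => stirlingRemainder (x + n)) atTop (𝓝 0) := by
  have hlog : Tendsto (fun n : ℕ => log (1 + x / n)) atTop (𝓝 0) := by
    have h1 : Tendsto (fun n : ℕ => 1 + x / n) atTop (𝓝 1) := by
      simpa using (tendsto_const_div_atTop_nhds_zero_nat x).const_add 1
    simpa [Function.comp_def] using (continuousAt_log one_ne_zero).tendsto.comp h1
  have hmul : Tendsto (fun n : ℕ => n * log (1 + x / n)) atTop (𝓝 x) :=
    tendsto_nat_mul_log_one_add_of_tendsto <| tendsto_const_nhds.congr' <|
      (eventually_ne_atTop 0).mono fun n hn => by field_simp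
  have h := ((tendsto_log_Gamma_add_natCast_sub hx).add tendsto_stirlingRemainder_natCast).sub
    (((hmul.add (hlog.const_mul x)).sub_const x).add (hlog.div_const 2))
  simp only [add_zero, mul_zero, sub_self, zero_div] at h
  refine h.congr' ((eventually_ne_atTop 0).mono fun n hn => ?_)
  have hn0 : (0 : ℝ) < n := by positivity
  have hsplit : log (x + n) = log n + log (1 + x / n) := by
    rw [← log_mul hn0.ne' (by positivity)]
    congr 1
    field
  simp only [stirlingRemainder, Gamma_nat_eq_factorial]
  rw [log_mul (by positivity) (by positivity : x + n ≠ 0), log_mul (by positivity) hn0.ne',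
    hsplit]
  ring

theorem stirlingRemainder_mem_Ioo {x : ℝ} (hx : 0 < x) :
    stirlingRemainder x ∈ Set.Ioo 0 (1 / (12 * x)) := by
  -- `μ (x + n)` decreases and `μ (x + n) - 1 / (12 (x + n))` increases, both to `0`.
  have hcast (n : ℕ) : x + ↑(n + 1) = x + n + 1 := by push_cast; ring
  have hanti : Antitone fun n : ℕ => stirlingRemainder (x + n) :=
    antitone_nat_of_succ_le fun n => by
      rw [hcast]
      exact (sub_pos.1 (stirlingRemainder_sub_add_one_pos (by positivity))).le
  have hmono : Monotone fun n : ℕ => stirlingRemainder (x + n) - 1 / (12 * (x + n)) :=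
    monotone_nat_of_le_succ fun n => by
      rw [hcast]
      linarith [stirlingRemainder_sub_add_one_lt (x := x + n) (by positivity)]
  have hlim := tendsto_stirlingRemainder_add_natCast hx
  have hinv : Tendsto (fun n : ℕ => 1 / (12 * (x + n))) atTop (𝓝 0) :=
    tendsto_const_nhds.div_atTop <|
      (tendsto_atTop_add_const_left _ x tendsto_natCast_atTop_atTop).const_mul_atTop
        (by norm_num)
  have h1 := hanti.le_of_tendsto hlim 1
  have h2 := hmono.ge_of_tendsto (by simpa using hlim.sub hinv) 1
  simp only [Nat.cast_one] at h1 h2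
  constructor
  · linarith [stirlingRemainder_sub_add_one_pos hx]
  · linarith [stirlingRemainder_sub_add_one_lt hx]

lemma unitBallVol_eq (ι : Type*) [Fintype ι] [Nonempty ι] :
    unitBallVol ι = √π ^ Fintype.card ι / Gamma (Fintype.card ι / 2 + 1) := by
  rw [unitBallVol, EuclideanSpace.volume_ball, ENNReal.ofReal_one, one_pow, one_mul,
    ENNReal.toReal_ofReal (by positivity)]

lemma log_unitBallVol_fin {N : ℕ} (hN : N ≠ 0) :
    log (unitBallVol (Fin N)) = -(N / 2) * log (N / (2 * π * exp 1)) - 1 / 2 * log (N * π) -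
      stirlingRemainder (N / 2) := by
  have : Nonempty (Fin N) := ⟨⟨0, Nat.pos_of_ne_zero hN⟩⟩
  have hN0 : (0 : ℝ) < N := by positivity
  rw [unitBallVol_eq, Fintype.card_fin, stirlingRemainder, log_div (by positivity)
    (Gamma_pos_of_pos (by positivity)).ne', log_pow, log_sqrt pi_pos.le,
    log_div hN0.ne' (by positivity), log_div hN0.ne' two_ne_zero,
    log_mul (by positivity) (exp_ne_zero 1), log_exp, log_mul two_ne_zero pi_ne_zero,
    log_mul hN0.ne' pi_ne_zero, show 2 * π * (N / 2) = π * N by ring,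
    log_mul pi_ne_zero hN0.ne']
  ring

/-- For all sufficiently large `N`, the volume `V_N` of the unit ball in
`ℝ^N` satisfies `log₂ V_N = −(N/2)·log₂(N/(2πe)) − (1/2)·log₂(Nπ) − ε` with
`0 < ε < (log₂ e)/(6N)`. -/
theorem statement15 :
    ∀ᶠ N : ℕ in Filter.atTop, ∃ ε : ℝ,
      0 < ε ∧ ε < Real.logb 2 (Real.exp 1) / (6 * (N : ℝ)) ∧
      Real.logb 2 (unitBallVol (Fin N)) =
        -((N : ℝ) / 2) * Real.logb 2 ((N : ℝ) / (2 * Real.pi * Real.exp 1)) -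
          (1 / 2) * Real.logb 2 ((N : ℝ) * Real.pi) - ε := by
  filter_upwards [eventually_ne_atTop 0] with N hN
  obtain ⟨hpos, hlt⟩ := stirlingRemainder_mem_Ioo (x := N / 2) (by positivity)
  have hlog2 : 0 < log 2 := log_pos one_lt_two
  refine ⟨stirlingRemainder (N / 2) / log 2, div_pos hpos hlog2, ?_, ?_⟩
  · rw [show 12 * ((N : ℝ) / 2) = 6 * N by ring] at hlt
    rw [logb, log_exp, div_right_comm]
    exact div_lt_div_of_pos_right hlt hlog2
  · simp only [logb, log_unitBallVol_fin hN]
    ring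

end
end
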